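/- Let L ∈ Λ satisfy ⟨L,L⟩ = 1 and ⟨L,K⟩ = −3. Then for all D₁, D₂ ∈ Λ the following identity holds in Λ: ⟨D₁,D₂⟩·L + Σ_{(E,F)} ⟨E,D₁⟩⟨E,D₂⟩·F = ⟨L,D₁⟩·D₂ + Σ_{(E,F)} ⟨F,D₁⟩⟨E,D₂⟩·E, where both sums run over all pairs (E,F) with E a line class, F a fiber class, and E + F = L. -/

import Mathlib

/-- The Picard lattice of the cubic surface: free ℤ-module of rank 7
with basis h, e₁, …, e₆ (coordinates: index 0 ↦ coefficient of h,
index i+1 ↦ coefficient of eᵢ). -/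
abbrev Lam : Type := Fin 7 → ℤ

/-- The intersection form: ⟨h,h⟩ = 1, ⟨eᵢ,eᵢ⟩ = −1, distinct basis vectors orthogonal. -/
def ip (x y : Lam) : ℤ := x 0 * y 0 - ∑ i : Fin 6, x i.succ * y i.succ

/-- The canonical class K = −3h + e₁ + ⋯ + e₆. -/
def Kc : Lam := ![-3, 1, 1, 1, 1, 1, 1]

/-- A line class: x with ⟨x,x⟩ = −1 and ⟨x,K⟩ = −1. -/
def IsLine (x : Lam) : Prop := ip x x = -1 ∧ ip x Kc = -1

/-- A fiber class: x with ⟨x,x⟩ = 0 and ⟨x,K⟩ = −2. -/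
def IsFiber (x : Lam) : Prop := ip x x = 0 ∧ ip x Kc = -2

/-!
The pairs are exactly `(E, L - E)` with `E` a line orthogonal to `L`. These lines, together with
`L`, form an orthonormal basis of `Λ` of signature `(1, 6)`, so every `D` expands as
`D = ⟨L,D⟩ L - ∑ ⟨E,D⟩ E`; substituting this expansion of `D₂` turns both sides into
`⟨L,D₁⟩⟨L,D₂⟩ L`. The expansion is clear for `L = h`, whose orthogonal lines are `e₁, …, e₆`, and
it is transported to every `L` by reflections in roots `r` (`⟨r,r⟩ = -2`, `⟨r,K⟩ = 0`), which are
isometries fixing `K`. Descent on `⟨h,L⟩`: it is at least `1` by Cauchy–Schwarz, equal to `1` only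
for `L = h`, and otherwise the root `h - eᵢ - eⱼ - eₖ` built on the three smallest coordinates of
`L` has `⟨L,r⟩ < 0`, so its reflection lowers `⟨h,L⟩`.
-/

namespace LinearMap.BilinForm

variable {R M : Type*} [CommRing R] [AddCommGroup M] [Module R M] {B : LinearMap.BilinForm R M}

theorem IsSymm.assoc_identity_of_expansion (hB : B.IsSymm) {L : M} {T : Finset M}
    (hT : ∀ D, B L D • L - ∑ E ∈ T, B E D • E = D) (D₁ D₂ : M) :
    B D₁ D₂ • L + ∑ E ∈ T, (B E D₁ * B E D₂) • (L - E) =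
      B L D₁ • D₂ + ∑ E ∈ T, (B (L - E) D₁ * B E D₂) • E := by
  set V := ∑ E ∈ T, B E D₂ • E with hV
  have hD₂ : V = B L D₂ • L - D₂ := by linear_combination (norm := module) -(hT D₂)
  have hcoef : ∑ E ∈ T, B E D₁ * B E D₂ = B L D₁ * B L D₂ - B D₁ D₂ := by
    have h := congrArg (fun x => B x D₁) hD₂
    simp only [hV, map_sum, map_smul, map_sub, LinearMap.sum_apply,
      LinearMap.smul_apply, LinearMap.sub_apply, smul_eq_mul, hB.eq D₂ D₁,
      mul_comm (B _ D₂)] at h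
    exact h
  have hsum₁ : ∑ E ∈ T, (B E D₁ * B E D₂) • (L - E) =
      (B L D₁ * B L D₂ - B D₁ D₂) • L - ∑ E ∈ T, (B E D₁ * B E D₂) • E := by
    simp only [smul_sub, Finset.sum_sub_distrib, ← Finset.sum_smul, hcoef]
  have hsum₂ : ∑ E ∈ T, (B (L - E) D₁ * B E D₂) • E =
      B L D₁ • V - ∑ E ∈ T, (B E D₁ * B E D₂) • E := by
    simp only [hV, map_sub, LinearMap.sub_apply, sub_mul, sub_smul, Finset.sum_sub_distrib,
      mul_smul, Finset.smul_sum]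
  rw [hsum₁, hsum₂, hD₂]
  module

theorem IsSymm.apply_reflection_reflection (hB : B.IsSymm) {r : M} (hr : (-B r) r = 2) (x y : M) :
    B (Module.reflection hr x) (Module.reflection hr y) = B x y := by
  have hrr : B r r = -2 := by simpa [neg_eq_iff_eq_neg] using hr
  simp only [Module.reflection_apply, LinearMap.neg_apply, neg_smul, sub_neg_eq_add, map_add,
    map_smul, LinearMap.add_apply, LinearMap.smul_apply, smul_eq_mul, hrr, hB.eq x r]
  ring

end LinearMap.BilinForm

namespace CubicSurface

theorem ip_comm (x y : Lam) : ip x y = ip y x := by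
  simp only [ip, mul_comm]

theorem ip_add_left (x y z : Lam) : ip (x + y) z = ip x z + ip y z := by
  simp only [ip, Pi.add_apply, add_mul, Finset.sum_add_distrib]; ring

theorem ip_sub_left (x y z : Lam) : ip (x - y) z = ip x z - ip y z := by
  simp only [ip, Pi.sub_apply, sub_mul, Finset.sum_sub_distrib]; ring

theorem ip_smul_left (c : ℤ) (x y : Lam) : ip (c • x) y = c * ip x y := by
  simp only [ip, Pi.smul_apply, smul_eq_mul, mul_assoc, ← Finset.mul_sum]; ring

theorem ip_sub_right (x y z : Lam) : ip x (y - z) = ip x y - ip x z := by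
  rw [ip_comm, ip_sub_left, ip_comm y, ip_comm z]

def ipForm : LinearMap.BilinForm ℤ Lam :=
  LinearMap.mk₂ ℤ ip ip_add_left ip_smul_left
    (fun x y z => by rw [ip_comm, ip_add_left, ip_comm y, ip_comm z])
    (fun c x y => by rw [ip_comm, ip_smul_left, ip_comm y, smul_eq_mul])

theorem ipForm_apply (x y : Lam) : ipForm x y = ip x y := rfl

theorem isSymm_ipForm : ipForm.IsSymm := ⟨ip_comm⟩

def hBasis : Lam := Pi.single 0 1

def eBasis (i : Fin 6) : Lam := Pi.single i.succ 1

theorem ip_hBasis (x : Lam) : ip x hBasis = x 0 := by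
  simp [ip, hBasis]

theorem ip_eBasis (x : Lam) (i : Fin 6) : ip x (eBasis i) = -x i.succ := by
  simp [ip, eBasis, Pi.single_apply]

theorem Kc_zero : Kc 0 = -3 := rfl

theorem Kc_succ (i : Fin 6) : Kc i.succ = 1 := by
  fin_cases i <;> rfl

theorem ip_Kc (x : Lam) : ip x Kc = -3 * x 0 - ∑ i : Fin 6, x i.succ := by
  simp [ip, Kc_zero, Kc_succ, mul_comm]

theorem isFiber_sub_iff {L E : Lam} (hLL : ip L L = 1) (hLK : ip L Kc = -3) (hE : IsLine E) :
    IsFiber (L - E) ↔ ip L E = 0 := by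
  have hsq : ip (L - E) (L - E) = -2 * ip L E := by
    rw [ip_sub_left, ip_sub_right, ip_sub_right, ip_comm E L, hLL, hE.1]; ring
  have hK : ip (L - E) Kc = -2 := by rw [ip_sub_left, hLK, hE.2]; norm_num
  simp [IsFiber, hsq, hK]

theorem pairs_eq_image {L : Lam} (hLL : ip L L = 1) (hLK : ip L Kc = -3) :
    {p : Lam × Lam | IsLine p.1 ∧ IsFiber p.2 ∧ p.1 + p.2 = L} =
      (fun E => (E, L - E)) '' {E | IsLine E ∧ ip L E = 0} := by
  ext ⟨E, F⟩
  simp only [Set.mem_image, Prod.mk.injEq]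
  constructor
  · rintro ⟨hE, hF, rfl⟩
    rw [← add_sub_cancel_left E F] at hF
    exact ⟨E, ⟨hE, (isFiber_sub_iff hLL hLK hE).1 hF⟩, rfl, add_sub_cancel_left E F⟩
  · rintro ⟨E, ⟨hE, hLE⟩, rfl, rfl⟩
    exact ⟨hE, (isFiber_sub_iff hLL hLK hE).2 hLE, add_sub_cancel E L⟩

def IsLineFrame (L : Lam) (T : Finset Lam) : Prop :=
  (T : Set Lam) = {E | IsLine E ∧ ip L E = 0} ∧ ∀ D, ip L D • L - ∑ E ∈ T, ip E D • E = D

theorem IsLineFrame.map {L : Lam} {T : Finset Lam} (σ : Lam ≃ₗ[ℤ] Lam)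
    (hσ : ∀ x y, ip (σ x) (σ y) = ip x y) (hσK : σ Kc = Kc) (hT : IsLineFrame L T) :
    IsLineFrame (σ L) (T.map σ.toEquiv.toEmbedding) := by
  have hσ' : ∀ x y, ip (σ x) y = ip x (σ.symm y) := fun x y => by
    rw [← hσ x (σ.symm y), σ.apply_symm_apply]
  have hline : ∀ E, IsLine (σ E) ↔ IsLine E := fun E => by
    rw [IsLine, IsLine, hσ, hσ', σ.symm_apply_eq.mpr hσK.symm]
  constructor
  · ext E
    simp only [Finset.coe_map, Equiv.coe_toEmbedding, LinearEquiv.coe_toEquiv, hT.1, Set.mem_image]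
    constructor
    · rintro ⟨E, ⟨hE, hLE⟩, rfl⟩
      exact ⟨(hline E).2 hE, by rw [hσ, hLE]⟩
    · rintro ⟨hE, hLE⟩
      refine ⟨σ.symm E, ⟨(hline _).1 (by rwa [σ.apply_symm_apply]), ?_⟩, σ.apply_symm_apply E⟩
      rw [← hσ', hLE]
  · intro D
    calc ip (σ L) D • σ L - ∑ E ∈ T.map σ.toEquiv.toEmbedding, ip E D • E
        = σ (ip L (σ.symm D) • L - ∑ E ∈ T, ip E (σ.symm D) • E) := by
          simp only [Finset.sum_map, Equiv.coe_toEmbedding, LinearEquiv.coe_toEquiv, hσ', map_sub,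
            map_sum, map_zsmul]
      _ = D := by rw [hT.2, σ.apply_symm_apply]

theorem eq_eBasis_of_isLine {E : Lam} (hE : IsLine E) (h0 : E 0 = 0) : ∃ i, E = eBasis i := by
  have hsq : ∑ i : Fin 6, E i.succ ^ 2 = 1 := by
    have := hE.1; simp only [ip, h0, sq] at this ⊢; linarith
  have hsum : ∑ i : Fin 6, E i.succ = 1 := by
    have := hE.2; rw [ip_Kc, h0] at this; linarith
  obtain ⟨i, hi⟩ : ∃ i : Fin 6, E i.succ ≠ 0 := by
    by_contra! h; simp [h] at hsum
  have hrest : ∀ j ≠ i, E j.succ = 0 := by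
    have hi2 : 1 ≤ E i.succ ^ 2 := by nlinarith [Int.one_le_abs hi, sq_abs (E i.succ)]
    rw [← Finset.add_sum_erase _ _ (Finset.mem_univ i)] at hsq
    have hzero : ∑ j ∈ Finset.univ.erase i, E j.succ ^ 2 = 0 :=
      le_antisymm (by linarith) (Finset.sum_nonneg fun j _ => sq_nonneg _)
    intro j hj
    simpa using (Finset.sum_eq_zero_iff_of_nonneg fun j _ => sq_nonneg (E j.succ)).1 hzero j
      (Finset.mem_erase.2 ⟨hj, Finset.mem_univ j⟩)
  have hi1 : E i.succ = 1 := by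
    rwa [Finset.sum_eq_single i (fun j _ hj => hrest j hj) (by simp)] at hsum
  refine ⟨i, funext fun t => Fin.cases ?_ (fun j => ?_) t⟩
  · simp [eBasis, h0]
  · by_cases hj : j = i
    · simp [eBasis, hj, hi1]
    · simp [eBasis, hj, hrest j hj]

theorem eBasis_injective : Function.Injective eBasis := fun i j h => by
  simpa [eBasis, Pi.single_apply] using congrFun h i.succ

theorem isLineFrame_hBasis :
    IsLineFrame hBasis (Finset.univ.map ⟨eBasis, eBasis_injective⟩) := by
  constructor
  · ext E
    simp only [Finset.coe_map, Finset.coe_univ, Set.image_univ, Function.Embedding.coeFn_mk,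
      Set.mem_range]
    constructor
    · rintro ⟨i, rfl⟩
      refine ⟨⟨?_, ?_⟩, ?_⟩
      · rw [ip_eBasis]; simp [eBasis]
      · rw [ip_comm, ip_eBasis, Kc_succ]
      · rw [ip_eBasis]; simp [hBasis]
    · rintro ⟨hE, hhE⟩
      obtain ⟨i, rfl⟩ := eq_eBasis_of_isLine hE (by rwa [ip_comm, ip_hBasis] at hhE)
      exact ⟨i, rfl⟩
  · intro D
    conv_rhs => rw [← Finset.univ_sum_single D, Fin.sum_univ_succ]
    simp only [Finset.sum_map, Function.Embedding.coeFn_mk, ip_comm _ D, ip_hBasis, ip_eBasis,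
      neg_smul, Finset.sum_neg_distrib, sub_neg_eq_add]
    simp only [hBasis, eBasis, ← Pi.single_smul', smul_eq_mul, mul_one]

def reflection {r : Lam} (hr : ip r r = -2) : Lam ≃ₗ[ℤ] Lam :=
  Module.reflection (x := r) (f := -ipForm r) (by simp [ipForm_apply, hr])

theorem reflection_apply {r : Lam} (hr : ip r r = -2) (x : Lam) :
    reflection hr x = x + ip r x • r := by
  simp [reflection, Module.reflection_apply, ipForm_apply]

theorem reflection_reflection {r : Lam} (hr : ip r r = -2) (x : Lam) :
    reflection hr (reflection hr x) = x :=
  Module.involutive_reflection _ x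

theorem ip_reflection {r : Lam} (hr : ip r r = -2) (x y : Lam) :
    ip (reflection hr x) (reflection hr y) = ip x y :=
  isSymm_ipForm.apply_reflection_reflection _ x y

theorem reflection_Kc {r : Lam} (hr : ip r r = -2) (hrK : ip r Kc = 0) :
    reflection hr Kc = Kc := by
  simp [reflection_apply, hrK]

theorem sum_sq_apply_succ {L : Lam} (hLL : ip L L = 1) :
    ∑ i : Fin 6, L i.succ ^ 2 = L 0 ^ 2 - 1 := by
  simp only [ip, sq] at hLL ⊢; linarith

theorem sum_apply_succ {L : Lam} (hLK : ip L Kc = -3) : ∑ i : Fin 6, L i.succ = 3 - 3 * L 0 := by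
  rw [ip_Kc] at hLK; linarith

theorem one_le_apply_zero {L : Lam} (hLL : ip L L = 1) (hLK : ip L Kc = -3) : 1 ≤ L 0 := by
  have hcs := sq_sum_le_card_mul_sum_sq (s := Finset.univ) (f := fun i : Fin 6 => L i.succ)
  rw [sum_apply_succ hLK, sum_sq_apply_succ hLL] at hcs
  simp only [Finset.card_univ, Fintype.card_fin, Nat.cast_ofNat] at hcs
  nlinarith

theorem eq_hBasis_of_apply_zero {L : Lam} (hLL : ip L L = 1) (h1 : L 0 = 1) : L = hBasis := by
  have hsq := sum_sq_apply_succ hLL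
  rw [h1, one_pow, sub_self, Finset.sum_eq_zero_iff_of_nonneg fun i _ => sq_nonneg _] at hsq
  refine funext fun t => Fin.cases ?_ (fun j => ?_) t
  · simp [hBasis, h1]
  · simpa [hBasis] using hsq j (Finset.mem_univ j)

theorem exists_three_sum_lt {a : ℤ} {y : Fin 6 → ℤ} (ha : 2 ≤ a) (hsum : ∑ i, y i = 3 - 3 * a)
    (hsq : ∑ i, y i ^ 2 = a ^ 2 - 1) :
    ∃ i j k, i ≠ j ∧ i ≠ k ∧ j ≠ k ∧ a + y i + y j + y k < 0 := by
  set σ := Tuple.sort y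
  have hmono := Tuple.monotone_sort y
  rw [← Equiv.sum_comp σ] at hsum hsq
  refine ⟨σ 0, σ 1, σ 2, σ.injective.ne (by decide), σ.injective.ne (by decide),
    σ.injective.ne (by decide), ?_⟩
  simp only [Fin.sum_univ_six] at hsum hsq
  have h₁ : y (σ 0) ≤ y (σ 1) := hmono (by decide : (0 : Fin 6) ≤ 1)
  have h₂ : y (σ 1) ≤ y (σ 2) := hmono (by decide : (1 : Fin 6) ≤ 2)
  have h₃ : y (σ 2) ≤ y (σ 3) := hmono (by decide : (2 : Fin 6) ≤ 3)
  have h₄ : y (σ 3) ≤ y (σ 4) := hmono (by decide : (3 : Fin 6) ≤ 4)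
  have h₅ : y (σ 4) ≤ y (σ 5) := hmono (by decide : (4 : Fin 6) ≤ 5)
  -- for integers in increasing order, `a + y₀ + y₁ + y₂ ≥ 0` leaves only `a = 3`, all `yᵢ = -1`
  by_contra! hge
  obtain ⟨rfl, e₀, e₁, e₂, e₃, e₄, e₅⟩ : a = 3 ∧ y (σ 0) = -1 ∧ y (σ 1) = -1 ∧ y (σ 2) = -1 ∧
      y (σ 3) = -1 ∧ y (σ 4) = -1 ∧ y (σ 5) = -1 := by omega
  rw [e₀, e₁, e₂, e₃, e₄, e₅] at hsq
  norm_num at hsq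

def tripleRoot (i j k : Fin 6) : Lam := hBasis - eBasis i - eBasis j - eBasis k

theorem ip_tripleRoot (x : Lam) (i j k : Fin 6) :
    ip x (tripleRoot i j k) = x 0 + x i.succ + x j.succ + x k.succ := by
  simp only [tripleRoot, ip_sub_right, ip_hBasis, ip_eBasis]; ring

theorem tripleRoot_zero (i j k : Fin 6) : tripleRoot i j k 0 = 1 := by
  simp [tripleRoot, hBasis, eBasis]

theorem ip_tripleRoot_self {i j k : Fin 6} (hij : i ≠ j) (hik : i ≠ k) (hjk : j ≠ k) :
    ip (tripleRoot i j k) (tripleRoot i j k) = -2 := by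
  rw [ip_tripleRoot]
  simp [tripleRoot, hBasis, eBasis, hij, hik, hjk, hij.symm, hik.symm, hjk.symm]

theorem ip_tripleRoot_Kc (i j k : Fin 6) : ip (tripleRoot i j k) Kc = 0 := by
  rw [ip_comm, ip_tripleRoot, Kc_zero, Kc_succ, Kc_succ, Kc_succ]; norm_num

theorem exists_root_ip_neg {L : Lam} (hLL : ip L L = 1) (hLK : ip L Kc = -3) (h2 : 2 ≤ L 0) :
    ∃ r, ip r r = -2 ∧ ip r Kc = 0 ∧ r 0 = 1 ∧ ip L r < 0 := by
  obtain ⟨i, j, k, hij, hik, hjk, hlt⟩ :=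
    exists_three_sum_lt h2 (sum_apply_succ hLK) (sum_sq_apply_succ hLL)
  exact ⟨tripleRoot i j k, ip_tripleRoot_self hij hik hjk, ip_tripleRoot_Kc i j k,
    tripleRoot_zero i j k, by rwa [ip_tripleRoot]⟩

theorem exists_isLineFrame (L : Lam) (hLL : ip L L = 1) (hLK : ip L Kc = -3) :
    ∃ T, IsLineFrame L T := by
  induction hn : (L 0).toNat using Nat.strong_induction_on generalizing L with
  | _ n ih =>
  obtain h1 | h2 := (one_le_apply_zero hLL hLK).eq_or_lt
  · exact ⟨_, eq_hBasis_of_apply_zero hLL h1.symm ▸ isLineFrame_hBasis⟩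
  obtain ⟨r, hrr, hrK, hr0, hLr⟩ := exists_root_ip_neg hLL hLK h2
  have hlt : (reflection hrr L 0).toNat < n := by
    rw [reflection_apply, Pi.add_apply, Pi.smul_apply, hr0, ip_comm r L]
    simp only [Int.zsmul_eq_mul, mul_one]; omega
  obtain ⟨T, hT⟩ := ih _ hlt (reflection hrr L) (by rw [ip_reflection, hLL])
    (by rw [← reflection_Kc hrr hrK, ip_reflection, hLK]) rfl
  rw [← reflection_reflection hrr L]
  exact ⟨_, hT.map _ (ip_reflection hrr) (reflection_Kc hrr hrK)⟩

end CubicSurface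

/-- For L with ⟨L,L⟩ = 1, ⟨L,K⟩ = −3 and all D₁, D₂:
⟨D₁,D₂⟩L + Σ_{(E,F): E+F=L} ⟨E,D₁⟩⟨E,D₂⟩·F = ⟨L,D₁⟩D₂ + Σ_{(E,F): E+F=L} ⟨F,D₁⟩⟨E,D₂⟩·E,
where E ranges over line classes and F over fiber classes. -/
theorem assoc_identity_L :
    ∀ L : Lam, ip L L = 1 → ip L Kc = -3 →
    {p : Lam × Lam | IsLine p.1 ∧ IsFiber p.2 ∧ p.1 + p.2 = L}.Finite ∧
    ∀ D₁ D₂ : Lam,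
      ip D₁ D₂ • L +
        ∑ᶠ p ∈ {p : Lam × Lam | IsLine p.1 ∧ IsFiber p.2 ∧ p.1 + p.2 = L},
          (ip p.1 D₁ * ip p.1 D₂) • p.2 =
      ip L D₁ • D₂ +
        ∑ᶠ p ∈ {p : Lam × Lam | IsLine p.1 ∧ IsFiber p.2 ∧ p.1 + p.2 = L},
          (ip p.2 D₁ * ip p.1 D₂) • p.1 := by
  intro L hLL hLK
  obtain ⟨T, hTlines, hTexp⟩ := CubicSurface.exists_isLineFrame L hLL hLK
  have hpairs : {p : Lam × Lam | IsLine p.1 ∧ IsFiber p.2 ∧ p.1 + p.2 = L} =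
      (fun E => (E, L - E)) '' (T : Set Lam) := by
    rw [hTlines, CubicSurface.pairs_eq_image hLL hLK]
  have hinj : Set.InjOn (fun E => (E, L - E)) (T : Set Lam) := fun _ _ _ _ h => congrArg Prod.fst h
  refine ⟨hpairs ▸ T.finite_toSet.image _, fun D₁ D₂ => ?_⟩
  rw [hpairs, finsum_mem_image hinj, finsum_mem_image hinj, finsum_mem_coe_finset,
    finsum_mem_coe_finset]
  exact CubicSurface.isSymm_ipForm.assoc_identity_of_expansion hTexp D₁ D₂
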